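/- An integral domain D is pre-Schreier if and only if D is a ∗-domain and for every pair of finite sets {a_i}_{i=1}^m, {b_j}_{j=1}^n of nonzero elements of D, the pair of ideals (∩ a_i D, ∩ b_j D) is condensed, i.e., (∩ a_i D)(∩ b_j D) = {rs : r ∈ ∩ a_i D, s ∈ ∩ b_j D}. -/
import Mathlib


/-- A nonzero element `x` of a domain is primal if whenever `x ∣ y * z` for
nonzero `y, z`, there are `r, s` with `x = r * s`, `r ∣ y` and `s ∣ z`. -/
def IsPrimal' {D : Type*} [CommRing D] (x : D) : Prop :=
  x ≠ 0 ∧ ∀ y z : D, y ≠ 0 → z ≠ 0 → x ∣ y * z →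
    ∃ r s : D, x = r * s ∧ r ∣ y ∧ s ∣ z

/-- A domain is pre-Schreier if every nonzero element is primal. -/
def IsPreSchreier (D : Type*) [CommRing D] : Prop :=
  ∀ x : D, x ≠ 0 → IsPrimal' x

/-- `D` is a `∗`-domain: for all finite families of nonzero elements
`a_1,…,a_m` and `b_1,…,b_n`, `(⋂ a_i D)(⋂ b_j D) = ⋂_{i,j} a_i b_j D`. -/
def IsStarDomain (D : Type*) [CommRing D] : Prop :=
  ∀ (m n : ℕ) (a : Fin (m + 1) → D) (b : Fin (n + 1) → D),
    (∀ i, a i ≠ 0) → (∀ j, b j ≠ 0) →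
    (⨅ i, Ideal.span {a i}) * (⨅ j, Ideal.span {b j}) =
      ⨅ i, ⨅ j, Ideal.span {a i * b j}

/-- A pair of ideals `I, J` is condensed if `I * J = {i * j : i ∈ I, j ∈ J}`. -/
def CondensedPair {D : Type*} [CommRing D] (I J : Ideal D) : Prop :=
  ∀ x ∈ I * J, ∃ i ∈ I, ∃ j ∈ J, x = i * j

/-- The 2×2 interpolation step: if `u, v ∣ w'` and `u*c, v*c ∣ x`, then there is
`w` with `u, v ∣ w`, `w ∣ w'` and `w*c ∣ x`. -/
lemma preSchreier_step {D : Type*} [CommRing D] [IsDomain D] (hPS : IsPreSchreier D)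
    (u v w' c x : D) (hx : x ≠ 0) (hw' : w' ≠ 0)
    (h1 : u ∣ w') (h2 : v ∣ w') (h3 : u * c ∣ x) (h4 : v * c ∣ x) :
    ∃ w, u ∣ w ∧ v ∣ w ∧ w ∣ w' ∧ w * c ∣ x := by
  obtain ⟨p, hp⟩ := h1
  obtain ⟨q, hq⟩ := h2
  obtain ⟨e, he⟩ := h3
  obtain ⟨f, hf⟩ := h4
  have hu : u ≠ 0 := fun h => hw' (by simp [hp, h])
  have hv : v ≠ 0 := fun h => hw' (by simp [hq, h])
  have hc : c ≠ 0 := fun h => hx (by simp [he, h])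
  have hp0 : p ≠ 0 := fun h => hw' (by simp [hp, h])
  have hq0 : q ≠ 0 := fun h => hw' (by simp [hq, h])
  have he0 : e ≠ 0 := fun h => hx (by simp [he, h])
  have key : q * e = p * f := by
    have huvc : u * c * v ≠ 0 := mul_ne_zero (mul_ne_zero hu hc) hv
    apply mul_left_cancel₀ huvc
    have h5 : w' * x = u * c * v * (p * f) := by rw [hp, hf]; ring
    have h6 : w' * x = u * c * v * (q * e) := by rw [hq, he]; ring
    rw [← h5, ← h6]
  obtain ⟨p1, p2, hpp, hp1, hp2⟩ := (hPS p hp0).2 q e hq0 he0 ⟨f, key⟩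
  have hp10 : p1 ≠ 0 := fun h => hp0 (by simp [hpp, h])
  refine ⟨u * p2, dvd_mul_right u p2, ?_, ⟨p1, by rw [hp, hpp]; ring⟩, ?_⟩
  · obtain ⟨q', hq'⟩ := hp1
    refine ⟨q', mul_left_cancel₀ hp10 ?_⟩
    have : u * (p1 * p2) = v * (p1 * q') := by rw [← hpp, ← hq', ← hp, ← hq]
    linear_combination this
  · obtain ⟨e', he'⟩ := hp2
    exact ⟨e', by rw [he, he']; ring⟩

/-- Merging two lower bounds against a family of upper constraints. -/
lemma preSchreier_merge {D : Type*} [CommRing D] [IsDomain D] (hPS : IsPreSchreier D) :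
    ∀ (n : ℕ) (b : Fin (n + 1) → D) (u v x : D), x ≠ 0 → u ≠ 0 → v ≠ 0 →
    (∀ j, u * b j ∣ x) → (∀ j, v * b j ∣ x) →
    ∃ w, u ∣ w ∧ v ∣ w ∧ ∀ j, w * b j ∣ x := by
  intro n
  induction n with
  | zero =>
    intro b u v x hx hu hv hub hvb
    obtain ⟨w, h1, h2, _, h4⟩ := preSchreier_step hPS u v (u * v) (b 0) x hx
      (mul_ne_zero hu hv) (dvd_mul_right u v) (dvd_mul_left v u) (hub 0) (hvb 0)
    exact ⟨w, h1, h2, fun j => by rw [show j = 0 from Fin.ext (by omega)]; exact h4⟩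
  | succ n ih =>
    intro b u v x hx hu hv hub hvb
    obtain ⟨w', hw1, hw2, hw3⟩ := ih (fun j => b j.castSucc) u v x hx hu hv
      (fun j => hub j.castSucc) (fun j => hvb j.castSucc)
    have hw'0 : w' ≠ 0 := by
      intro h
      exact hx (zero_dvd_iff.mp (by simpa [h] using hw3 0))
    obtain ⟨w, h1, h2, h3, h4⟩ := preSchreier_step hPS u v w' (b (Fin.last (n + 1))) x hx
      hw'0 hw1 hw2 (hub _) (hvb _)
    refine ⟨w, h1, h2, fun j => ?_⟩
    refine Fin.lastCases ?_ (fun i => ?_) j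
    · exact h4
    · exact dvd_trans (mul_dvd_mul_right h3 _) (hw3 i)

/-- Riesz-type interpolation: if all `a i * b j ∣ x ≠ 0` then `x = r * s`
with `a i ∣ r` and `b j ∣ s`. -/
lemma preSchreier_key {D : Type*} [CommRing D] [IsDomain D] (hPS : IsPreSchreier D)
    (m n : ℕ) (a : Fin (m + 1) → D) (b : Fin (n + 1) → D) (x : D)
    (hx : x ≠ 0) (ha : ∀ i, a i ≠ 0) (hb : ∀ j, b j ≠ 0)
    (h : ∀ i j, a i * b j ∣ x) :
    ∃ r s, x = r * s ∧ (∀ i, a i ∣ r) ∧ (∀ j, b j ∣ s) := by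
  have main : ∀ (m : ℕ) (a : Fin (m + 1) → D), (∀ i, a i ≠ 0) →
      (∀ i j, a i * b j ∣ x) → ∃ w, (∀ i, a i ∣ w) ∧ ∀ j, w * b j ∣ x := by
    intro m
    induction m with
    | zero =>
      intro a ha h
      exact ⟨a 0, fun i => by rw [show i = 0 from Fin.ext (by omega)], fun j => h 0 j⟩
    | succ m ih =>
      intro a ha h
      obtain ⟨w', hw1, hw2⟩ := ih (fun i => a i.castSucc) (fun i => ha _)
        (fun i j => h i.castSucc j)
      have hw'0 : w' ≠ 0 := by
        intro hzero
        exact hx (zero_dvd_iff.mp (by simpa [hzero] using hw2 0))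
      obtain ⟨w, h1, h2, h3⟩ := preSchreier_merge hPS n b w' (a (Fin.last (m + 1))) x hx
        hw'0 (ha _) hw2 (fun j => h _ j)
      refine ⟨w, fun i => ?_, h3⟩
      refine Fin.lastCases ?_ (fun i => ?_) i
      · exact h2
      · exact dvd_trans (hw1 i) h1
  obtain ⟨w, hw1, hw2⟩ := main m a ha h
  have hwx : w ∣ x := dvd_trans (dvd_mul_right w (b 0)) (hw2 0)
  obtain ⟨s, hs⟩ := hwx
  have hw0 : w ≠ 0 := fun hzero => hx (by simp [hs, hzero])
  refine ⟨w, s, hs, hw1, fun j => ?_⟩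
  have : w * b j ∣ w * s := hs ▸ hw2 j
  exact (mul_dvd_mul_iff_left hw0).mp this

theorem stmt9 (D : Type*) [CommRing D] [IsDomain D] :
    IsPreSchreier D ↔
      (IsStarDomain D ∧
        ∀ (m n : ℕ) (a : Fin (m + 1) → D) (b : Fin (n + 1) → D),
          (∀ i, a i ≠ 0) → (∀ j, b j ≠ 0) →
          CondensedPair (⨅ i, Ideal.span {a i}) (⨅ j, Ideal.span {b j})) := by
  constructor
  · intro hPS
    have star : IsStarDomain D := by
      intro m n a b ha hb
      apply le_antisymm
      · refine le_iInf fun i => le_iInf fun j => ?_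
        calc (⨅ i, Ideal.span {a i}) * (⨅ j, Ideal.span {b j})
            ≤ Ideal.span {a i} * Ideal.span {b j} :=
              Ideal.mul_mono (iInf_le _ i) (iInf_le _ j)
          _ = Ideal.span {a i * b j} := Ideal.span_singleton_mul_span_singleton _ _
      · intro x hx
        simp only [Ideal.mem_iInf, Ideal.mem_span_singleton] at hx
        by_cases h0 : x = 0
        · simp [h0]
        · obtain ⟨r, s, hrs, hr, hs⟩ := preSchreier_key hPS m n a b x h0 ha hb hx
          rw [hrs]
          exact Ideal.mul_mem_mul
            (by simp only [Ideal.mem_iInf, Ideal.mem_span_singleton]; exact hr)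
            (by simp only [Ideal.mem_iInf, Ideal.mem_span_singleton]; exact hs)
    refine ⟨star, ?_⟩
    intro m n a b ha hb x hx
    rw [star m n a b ha hb] at hx
    simp only [Ideal.mem_iInf, Ideal.mem_span_singleton] at hx
    by_cases h0 : x = 0
    · exact ⟨0, zero_mem _, 0, zero_mem _, by simp [h0]⟩
    · obtain ⟨r, s, hrs, hr, hs⟩ := preSchreier_key hPS m n a b x h0 ha hb hx
      exact ⟨r, by simp only [Ideal.mem_iInf, Ideal.mem_span_singleton]; exact hr,
        s, by simp only [Ideal.mem_iInf, Ideal.mem_span_singleton]; exact hs, hrs⟩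
  · rintro ⟨hstar, hcond⟩ x hx
    refine ⟨hx, fun y z hy hz hdvd => ?_⟩
    set a : Fin 2 → D := ![x, z] with ha_def
    set b : Fin 2 → D := ![x, y] with hb_def
    have ha : ∀ i, a i ≠ 0 := by intro i; fin_cases i <;> simpa [ha_def]
    have hb : ∀ j, b j ≠ 0 := by intro j; fin_cases j <;> simpa [hb_def]
    have hmem : x * y * z ∈ (⨅ i, Ideal.span {a i}) * (⨅ j, Ideal.span {b j}) := by
      rw [hstar 1 1 a b ha hb]
      simp only [Ideal.mem_iInf, Ideal.mem_span_singleton]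
      intro i j
      obtain ⟨t, ht⟩ := hdvd
      have hax : a i = x ∨ a i = z := by
        fin_cases i <;> simp [ha_def]
      have hbx : b j = x ∨ b j = y := by
        fin_cases j <;> simp [hb_def]
      rcases hax with h1 | h1 <;> rcases hbx with h2 | h2 <;> rw [h1, h2]
      · exact ⟨t, by rw [mul_assoc, ht]; ring⟩
      · exact ⟨z, by ring⟩
      · exact ⟨y, by ring⟩
      · exact ⟨x, by ring⟩
    obtain ⟨i, hi, j, hj, hij⟩ := hcond 1 1 a b ha hb _ hmem
    simp only [Ideal.mem_iInf, Ideal.mem_span_singleton] at hi hj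
    have hxi : x ∣ i := by simpa [ha_def] using hi 0
    have hzi : z ∣ i := by simpa [ha_def] using hi 1
    have hxj : x ∣ j := by simpa [hb_def] using hj 0
    have hyj : y ∣ j := by simpa [hb_def] using hj 1
    have hxyz0 : x * y * z ≠ 0 := mul_ne_zero (mul_ne_zero hx hy) hz
    have hi0 : i ≠ 0 := fun h => hxyz0 (by rw [hij, h, zero_mul])
    have hj0 : j ≠ 0 := fun h => hxyz0 (by rw [hij, h, mul_zero])
    obtain ⟨r, hr⟩ := hzi
    obtain ⟨s, hs⟩ := hyj
    have hr0 : r ≠ 0 := fun h => hi0 (by simp [hr, h])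
    have hs0 : s ≠ 0 := fun h => hj0 (by simp [hs, h])
    have hx_eq : x = r * s := by
      apply mul_left_cancel₀ (mul_ne_zero hy hz)
      rw [hr, hs] at hij
      linear_combination hij
    refine ⟨r, s, hx_eq, ?_, ?_⟩
    · obtain ⟨k, hk⟩ := hxj
      refine ⟨k, mul_left_cancel₀ hs0 ?_⟩
      have : y * s = r * s * k := by rw [← hs, hk, hx_eq]
      linear_combination this
    · obtain ⟨l, hl⟩ := hxi
      refine ⟨l, mul_left_cancel₀ hr0 ?_⟩
      have : z * r = r * s * l := by rw [← hr, hl, hx_eq]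
      linear_combination this
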